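/- In a perfect REL-algebra, let a, b, c be atoms with a ≤ b;c and a⌣ ≠ 0, b⌣ ≠ 0, c⌣ ≠ 0. Then a⌣ ≤ (c⌣);(b⌣). -/
import Mathlib

class PerfectREL (α : Type*) [CompleteBooleanAlgebra α] [IsAtomic α] where
  comp : α → α → α
  conv : α → α
  id' : α
  ax2 : ∀ x y : α, conv (x ⊓ conv y) = conv x ⊓ y
  ax3l : ∀ x y z : α, comp (x ⊔ y) z = comp x z ⊔ comp y z
  ax3r : ∀ x y z : α, comp x (y ⊔ z) = comp x y ⊔ comp x z
  ax4l : comp (⊤ : α) ⊥ = ⊥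
  ax4r : comp (⊥ : α) ⊤ = ⊥
  ax5l : ∀ x y z : α, comp (conv x) y ⊓ z = comp (conv x) (y ⊓ comp (conv (conv x)) z) ⊓ z
  ax5r : ∀ x y z : α, comp x (conv y) ⊓ z = comp (x ⊓ comp z (conv (conv y))) (conv y) ⊓ z
  ax6l : ∀ x : α, comp id' x ≤ x
  ax6r : ∀ x : α, comp x id' ≤ x
  ax7 : comp (id' : α) id' = id'
  ax8 : comp ((conv (⊤ : α))ᶜ) ((conv (⊤ : α))ᶜ) ⊓ id' = ⊥
  ax9a : ∀ x y z : α, comp (comp (x ⊓ id') y) z = comp (x ⊓ id') (comp y z)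
  ax9b : ∀ x y z : α, comp (comp x (y ⊓ id')) z = comp x (comp (y ⊓ id') z)
  ax9c : ∀ x y z : α, comp (comp x y) (z ⊓ id') = comp x (comp y (z ⊓ id'))
  conv_sSup : ∀ S : Set α, conv (sSup S) = ⨆ x ∈ S, conv x
  comp_sSup_left : ∀ (S : Set α) (y : α), comp (sSup S) y = ⨆ x ∈ S, comp x y
  comp_sSup_right : ∀ (x : α) (S : Set α), comp x (sSup S) = ⨆ y ∈ S, comp x y

open PerfectREL

variable {α : Type*} [CompleteBooleanAlgebra α] [IsAtomic α] [PerfectREL α]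

lemma conv_bot' : conv (⊥ : α) = ⊥ := by
  have := conv_sSup (∅ : Set α)
  simpa using this

lemma comp_bot' (x : α) : comp x (⊥ : α) = ⊥ := by
  have := comp_sSup_right x (∅ : Set α)
  simpa using this

lemma bot_comp' (y : α) : comp (⊥ : α) y = ⊥ := by
  have := comp_sSup_left (∅ : Set α) y
  simpa using this

lemma conv_mono' {x y : α} (h : x ≤ y) : conv x ≤ conv y := by
  have h2 := conv_sSup ({x, y} : Set α)
  simp only [sSup_insert, csSup_singleton, iSup_insert, iSup_singleton] at h2
  rw [sup_eq_right.mpr h] at h2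
  rw [h2]; exact le_sup_left

lemma conv_conv' (y : α) : conv (conv y) = conv (⊤ : α) ⊓ y := by
  have := ax2 (⊤ : α) y
  simpa using this

lemma atom_le_conv_top {a : α} (ha : IsAtom a) (hac : conv a ≠ (⊥ : α)) :
    a ≤ conv (⊤ : α) := by
  by_contra hle
  have h0 : a ⊓ conv (⊤ : α) = ⊥ := by
    rcases (ha.le_iff.mp inf_le_left) with h | h
    · exact h
    · exact absurd (h ▸ inf_le_right) hle
  have h2 : conv (a ⊓ conv (⊤:α)) = conv a := by
    have := ax2 a (⊤ : α)
    simpa using this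
  rw [h0, conv_bot'] at h2
  exact hac h2.symm

lemma conv_conv_atom {a : α} (ha : IsAtom a) (hac : conv a ≠ (⊥ : α)) :
    conv (conv a) = a := by
  rw [conv_conv', inf_eq_right.mpr (atom_le_conv_top ha hac)]

lemma conv_atom {a : α} (ha : IsAtom a) (hac : conv a ≠ (⊥ : α)) :
    IsAtom (conv a) := by
  constructor
  · exact hac
  · intro x hx
    by_contra hxb
    have hxle : x ≤ conv a := le_of_lt hx
    have hcx : conv x ≤ a := by
      have := conv_mono' hxle
      rwa [conv_conv_atom ha hac] at this
    have hcxne : conv x ≠ ⊥ := by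
      intro hb
      have hxt : x ≤ conv (⊤ : α) := hxle.trans (conv_mono' le_top)
      have : conv (conv x) = x := by
        rw [conv_conv', inf_eq_right.mpr hxt]
      rw [hb, conv_bot'] at this
      exact hxb this.symm
    have : conv x = a := (ha.le_iff.mp hcx).resolve_left hcxne
    have : x = conv a := by
      have hxt : x ≤ conv (⊤ : α) := hxle.trans (conv_mono' le_top)
      have h2 : conv (conv x) = x := by rw [conv_conv', inf_eq_right.mpr hxt]
      rw [← h2, this]
    exact (ne_of_lt hx) this

lemma atom_le_of_inf_ne_bot {a x : α} (ha : IsAtom a) (h : a ⊓ x ≠ ⊥) : a ≤ x := by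
  rcases ha.le_iff.mp (inf_le_left : a ⊓ x ≤ a) with h' | h'
  · exact absurd h' h
  · exact h' ▸ inf_le_right

lemma rot1 {p q r : α} (hp : IsAtom p) (hr : IsAtom r)
    (hqc : conv q ≠ (⊥ : α)) (hq : IsAtom q) (h : p ≤ comp q r) :
    r ≤ comp (conv q) p := by
  have key := ax5l (conv q) r p
  rw [conv_conv_atom hq hqc] at key
  rw [inf_of_le_right h] at key
  apply atom_le_of_inf_ne_bot hr
  intro hb
  rw [hb, comp_bot'] at key
  simp at key
  exact hp.1 key

lemma rot2 {p q r : α} (hp : IsAtom p) (hq : IsAtom q)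
    (hrc : conv r ≠ (⊥ : α)) (hr : IsAtom r) (h : p ≤ comp q r) :
    q ≤ comp p (conv r) := by
  have key := ax5r q (conv r) p
  rw [conv_conv_atom hr hrc] at key
  rw [inf_of_le_right h] at key
  apply atom_le_of_inf_ne_bot hq
  intro hb
  rw [inf_comm] at key
  rw [hb, bot_comp'] at key
  simp at key
  exact hp.1 key

theorem cycle_conv_a (a b c : α) (ha : IsAtom a) (hb : IsAtom b) (hc : IsAtom c)
    (h : a ≤ comp b c) (hac : conv a ≠ (⊥ : α)) (hbc : conv b ≠ (⊥ : α))
    (hcc : conv c ≠ (⊥ : α)) :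
    conv a ≤ comp (conv c) (conv b) := by
  have h1 : c ≤ comp (conv b) a := rot1 ha hc hbc hb h
  have h2 : conv b ≤ comp c (conv a) := rot2 hc (conv_atom hb hbc) hac ha h1
  have h3 : conv a ≤ comp (conv c) (conv b) :=
    rot1 (conv_atom hb hbc) (conv_atom ha hac) hcc hc h2
  exact h3
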